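/- (Armijo step-size lower bound.) Let x ∈ relint(X) with v(x) ≠ 0 and let α(x) = δ^ℓ ᾱ(x) be the Armijo step-size, where ℓ is the smallest nonnegative integer with f(x + δ^ℓ ᾱ(x) v(x)) − f(x) ≤ −μ δ^ℓ ᾱ(x) ‖v(x)‖ₓ². Then α(x) ≥ min{2(1−μ)βδ/L, ᾱ(x)}. -/

import Mathlib

/-!
At a relative-interior point the direction `v = -H⁻¹ r` lies in `ker A` and satisfies
`⟨∇f(x), v⟩ = -‖v‖ₓ²`, and the cap `α₀(x)` in `ᾱ(x)` keeps `x + s v` feasible for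
`0 ≤ s ≤ ᾱ(x)`. The descent lemma along this segment, with `‖v‖ₓ² ≥ β ‖v‖²`, gives
`f(x + t v) - f(x) ≤ -t (1 - L t / (2β)) ‖v‖ₓ²`, so the Armijo test passes for every trial step
`δ^l ᾱ(x) ≤ 2(1-μ)β/L`. Hence backtracking either stops at once, or the last rejected step exceeds
`2(1-μ)β/L` and the accepted one is `δ` times it.
-/

open Matrix Filter Set

namespace HBA

noncomputable section

variable {n m : ℕ}

/-- Feasible set `X = {x | Ax = b, x ≥ 0}`. -/
def Feas (A : Matrix (Fin m) (Fin n) ℝ) (b : Fin m → ℝ) : Set (Fin n → ℝ) :=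
  {x | A *ᵥ x = b ∧ ∀ i, 0 ≤ x i}

/-- Relative interior of the feasible set: `{x | Ax = b, x > 0}`. -/
def RelInt (A : Matrix (Fin m) (Fin n) ℝ) (b : Fin m → ℝ) : Set (Fin n → ℝ) :=
  {x | A *ᵥ x = b ∧ ∀ i, 0 < x i}

/-- Euclidean norm on `Fin n → ℝ`. -/
def euclNorm (x : Fin n → ℝ) : ℝ := Real.sqrt (∑ i, (x i) ^ 2)

/-- The linear functional `h ↦ ∑ i, v i * h i`, as a continuous linear map. -/
def toDualCLM (v : Fin n → ℝ) : (Fin n → ℝ) →L[ℝ] ℝ :=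
  ∑ i, v i • (ContinuousLinearMap.proj i : (Fin n → ℝ) →L[ℝ] ℝ)

/-- Hessian metric `H(x) = diag(θ₁''(x₁),…,θₙ''(xₙ))`, where `D i = θᵢ''`. -/
def Hmat (D : Fin n → ℝ → ℝ) (x : Fin n → ℝ) : Matrix (Fin n) (Fin n) ℝ :=
  Matrix.diagonal fun i => D i (x i)

/-- Inverse Hessian metric `H(x)⁻¹ = diag(1/θᵢ''(xᵢ))`. -/
def Hinv (D : Fin n → ℝ → ℝ) (x : Fin n → ℝ) : Matrix (Fin n) (Fin n) ℝ :=
  Matrix.diagonal fun i => (D i (x i))⁻¹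

/-- Continuous extension of `H(x)⁻¹` to the boundary, setting `1/θᵢ''(xᵢ) := 0` if `xᵢ = 0`. -/
def HinvC (D : Fin n → ℝ → ℝ) (x : Fin n → ℝ) : Matrix (Fin n) (Fin n) ℝ :=
  Matrix.diagonal fun i => if x i = 0 then 0 else (D i (x i))⁻¹

/-- Dual variable `y(x) = (A H(x)⁻¹ Aᵀ)⁻¹ A H(x)⁻¹ ∇f(x)`. -/
def dualY (A : Matrix (Fin m) (Fin n) ℝ) (D : Fin n → ℝ → ℝ)
    (g : (Fin n → ℝ) → Fin n → ℝ) (x : Fin n → ℝ) : Fin m → ℝ :=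
  (A * Hinv D x * Aᵀ)⁻¹ *ᵥ (A *ᵥ (Hinv D x *ᵥ g x))

/-- Continuous boundary extension of the dual variable. -/
def dualYC (A : Matrix (Fin m) (Fin n) ℝ) (D : Fin n → ℝ → ℝ)
    (g : (Fin n → ℝ) → Fin n → ℝ) (x : Fin n → ℝ) : Fin m → ℝ :=
  (A * HinvC D x * Aᵀ)⁻¹ *ᵥ (A *ᵥ (HinvC D x *ᵥ g x))

/-- Reduced cost `r(x) = ∇f(x) − Aᵀ y(x)`. -/
def redCost (A : Matrix (Fin m) (Fin n) ℝ) (D : Fin n → ℝ → ℝ)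
    (g : (Fin n → ℝ) → Fin n → ℝ) (x : Fin n → ℝ) : Fin n → ℝ :=
  g x - Aᵀ *ᵥ dualY A D g x

/-- Continuous boundary extension of the reduced cost. -/
def redCostC (A : Matrix (Fin m) (Fin n) ℝ) (D : Fin n → ℝ → ℝ)
    (g : (Fin n → ℝ) → Fin n → ℝ) (x : Fin n → ℝ) : Fin n → ℝ :=
  g x - Aᵀ *ᵥ dualYC A D g x

/-- Search direction `v(x) = −H(x)⁻¹ r(x)`. -/
def searchDir (A : Matrix (Fin m) (Fin n) ℝ) (D : Fin n → ℝ → ℝ)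
    (g : (Fin n → ℝ) → Fin n → ℝ) (x : Fin n → ℝ) : Fin n → ℝ :=
  -(Hinv D x *ᵥ redCost A D g x)

/-- The squared local norm `‖z‖ₓ² = zᵀ H(x) z`. -/
def xnorm2 (D : Fin n → ℝ → ℝ) (x z : Fin n → ℝ) : ℝ := z ⬝ᵥ (Hmat D x *ᵥ z)

/-- Bootstrap step-size `ᾱ(x) = min{α₀(x), 2β/L}`, where
`α₀(x) = min{xᵢθᵢ''(xᵢ)/rᵢ(x) : rᵢ(x) > 0}` and `min ∅ = +∞`. -/
def alphaBar (A : Matrix (Fin m) (Fin n) ℝ) (D : Fin n → ℝ → ℝ)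
    (g : (Fin n → ℝ) → Fin n → ℝ) (β Lf : ℝ) (x : Fin n → ℝ) : ℝ :=
  sInf (insert (2 * β / Lf)
    {a : ℝ | ∃ i, 0 < redCost A D g x i ∧ a = x i * D i (x i) / redCost A D g x i})

/-- The Armijo sufficient-decrease condition at backtracking exponent `l`:
`f(x + δ^l ᾱ(x) v(x)) − f(x) ≤ −μ δ^l ᾱ(x) ‖v(x)‖ₓ²`. -/
def armijoCond (A : Matrix (Fin m) (Fin n) ℝ) (D : Fin n → ℝ → ℝ)
    (g : (Fin n → ℝ) → Fin n → ℝ) (f : (Fin n → ℝ) → ℝ) (β Lf μ δ : ℝ)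
    (x : Fin n → ℝ) (l : ℕ) : Prop :=
  f (x + (δ ^ l * alphaBar A D g β Lf x) • searchDir A D g x) - f x ≤
    -(μ * (δ ^ l * alphaBar A D g β Lf x) * xnorm2 D x (searchDir A D g x))

/-- The Armijo step-size `α(x) = δ^ℓ ᾱ(x)`, `ℓ` the smallest exponent giving sufficient decrease. -/
def stepSize (A : Matrix (Fin m) (Fin n) ℝ) (D : Fin n → ℝ → ℝ)
    (g : (Fin n → ℝ) → Fin n → ℝ) (f : (Fin n → ℝ) → ℝ) (β Lf μ δ : ℝ)
    (x : Fin n → ℝ) : ℝ :=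
  δ ^ sInf {l : ℕ | armijoCond A D g f β Lf μ δ x l} * alphaBar A D g β Lf x

/-- The iterates of the Hessian barrier algorithm: `x⁰ = x0`, `x^{k+1} = x^k + α(x^k) v(x^k)`. -/
def hba (A : Matrix (Fin m) (Fin n) ℝ) (D : Fin n → ℝ → ℝ)
    (g : (Fin n → ℝ) → Fin n → ℝ) (f : (Fin n → ℝ) → ℝ) (β Lf μ δ : ℝ)
    (x0 : Fin n → ℝ) : ℕ → Fin n → ℝ
  | 0 => x0
  | k + 1 =>
      hba A D g f β Lf μ δ x0 k
        + stepSize A D g f β Lf μ δ (hba A D g f β Lf μ δ x0 k)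
            • searchDir A D g (hba A D g f β Lf μ δ x0 k)

end

end HBA

theorem Matrix.vecMul_injective_of_rank_eq_card {K ι κ : Type*} [Field K] [Fintype ι]
    [Fintype κ] {A : Matrix ι κ K} (hA : A.rank = Fintype.card ι) :
    Function.Injective A.vecMul :=
  vecMul_injective_iff.2 <| linearIndependent_iff_card_eq_finrank_span.2 <| by
    rw [Set.finrank, ← rank_eq_finrank_span_row, hA]

theorem Matrix.isUnit_det_mul_diagonal_mul_transpose {ι κ : Type*} [Fintype ι] [DecidableEq ι]
    [Fintype κ] [DecidableEq κ] {A : Matrix ι κ ℝ} (hA : A.rank = Fintype.card ι)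
    {e : κ → ℝ} (he : ∀ k, 0 < e k) : IsUnit (A * diagonal e * Aᵀ).det := by
  have hpos : (A * diagonal e * Aᵀ).PosDef := by
    simpa using (PosDef.diagonal he).mul_mul_conjTranspose_same
      (vecMul_injective_of_rank_eq_card hA)
  exact hpos.det_pos.ne'.isUnit

theorem image_sub_le_of_deriv_sub_le {φ φ' : ℝ → ℝ} {t K : ℝ} (ht : 0 ≤ t)
    (hφ : ∀ s ∈ Set.Icc 0 t, HasDerivAt φ (φ' s) s)
    (hK : ∀ s ∈ Set.Icc 0 t, φ' s - φ' 0 ≤ K * s) :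
    φ t - φ 0 ≤ t * φ' 0 + K * t ^ 2 / 2 := by
  let B : ℝ → ℝ := fun s => φ 0 + s * φ' 0 + K * s ^ 2 / 2
  have hB : ∀ s, HasDerivAt B (φ' 0 + K * s) s := fun s => by
    have h := (((hasDerivAt_id' s).mul_const (φ' 0)).const_add (φ 0)).add
      (((hasDerivAt_pow 2 s).const_mul K).div_const 2)
    exact h.congr_deriv (by push_cast; ring)
  have key := image_le_of_deriv_right_le_deriv_boundary
    (fun s hs => (hφ s hs).continuousAt.continuousWithinAt)
    (fun s hs => (hφ s (Set.Ico_subset_Icc_self hs)).hasDerivWithinAt)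
    (by simp [B]) (fun s _ => (hB s).continuousAt.continuousWithinAt)
    (fun s _ => (hB s).hasDerivWithinAt)
    (fun s hs => by linarith [hK s (Set.Ico_subset_Icc_self hs)])
    (Set.right_mem_Icc.2 ht)
  simp only [B] at key
  linarith

theorem min_mul_le_pow_sInf_mul {P : ℕ → Prop} {δ a c : ℝ} (hδ : 0 ≤ δ)
    (hP : ∀ l, δ ^ l * a ≤ c → P l) : min (c * δ) a ≤ δ ^ sInf {l | P l} * a := by
  by_cases h : sInf {l | P l} = 0
  · simp [h]
  obtain ⟨k, hk⟩ := Nat.exists_eq_succ_of_ne_zero h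
  have hfail : k ∉ {l | P l} := Nat.notMem_of_lt_sInf (by rw [hk]; exact k.lt_succ_self)
  have hc : c < δ ^ k * a := lt_of_not_ge (mt (hP k) hfail)
  calc min (c * δ) a ≤ c * δ := min_le_left _ _
    _ ≤ δ ^ k * a * δ := mul_le_mul_of_nonneg_right hc.le hδ
    _ = δ ^ sInf {l | P l} * a := by rw [hk, pow_succ]; ring

namespace HBA

variable {n m : ℕ}

theorem euclNorm_smul (s : ℝ) (v : Fin n → ℝ) : euclNorm (s • v) = |s| * euclNorm v := by
  simp only [euclNorm, Pi.smul_apply, smul_eq_mul, mul_pow, ← Finset.mul_sum]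
  rw [Real.sqrt_mul (sq_nonneg s), Real.sqrt_sq_eq_abs]

theorem euclNorm_sq (v : Fin n → ℝ) : euclNorm v ^ 2 = ∑ i, v i ^ 2 :=
  Real.sq_sqrt (Finset.sum_nonneg fun _ _ => sq_nonneg _)

theorem sum_mul_le_euclNorm_mul (w v : Fin n → ℝ) :
    ∑ i, w i * v i ≤ euclNorm w * euclNorm v :=
  Real.sum_mul_le_sqrt_mul_sqrt _ _ _

theorem toDualCLM_apply (w z : Fin n → ℝ) : toDualCLM w z = ∑ i, w i * z i := by
  simp [toDualCLM]

theorem descent_along_segment {S : Set (Fin n → ℝ)} {f : (Fin n → ℝ) → ℝ}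
    {g : (Fin n → ℝ) → Fin n → ℝ} {L : ℝ}
    (hgrad : ∀ z ∈ S, HasFDerivAt f (toDualCLM (g z)) z)
    (hLip : ∀ z ∈ S, ∀ z' ∈ S, euclNorm (g z - g z') ≤ L * euclNorm (z - z'))
    {x v : Fin n → ℝ} {t : ℝ} (ht : 0 ≤ t) (hseg : ∀ s ∈ Set.Icc 0 t, x + s • v ∈ S) :
    f (x + t • v) - f x ≤ t * ∑ i, g x i * v i + L * (∑ i, v i ^ 2) * t ^ 2 / 2 := by
  have hderiv : ∀ s ∈ Set.Icc 0 t, HasDerivAt (fun u : ℝ => f (x + u • v))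
      (∑ i, g (x + s • v) i * v i) s := fun s hs => by
    have hline : HasDerivAt (fun u : ℝ => x + u • v) v s := by
      simpa using ((hasDerivAt_id s).smul_const v).const_add x
    have hcomp := (hgrad _ (hseg s hs)).comp_hasDerivAt s hline
    rw [toDualCLM_apply] at hcomp
    exact hcomp
  have hx : x ∈ S := by simpa using hseg 0 (Set.left_mem_Icc.2 ht)
  have hslope : ∀ s ∈ Set.Icc 0 t, ∑ i, g (x + s • v) i * v i - ∑ i, g (x + (0 : ℝ) • v) i * v i
      ≤ L * (∑ i, v i ^ 2) * s := fun s hs => by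
    have hLs := hLip _ (hseg s hs) _ hx
    rw [add_sub_cancel_left, euclNorm_smul, abs_of_nonneg hs.1] at hLs
    calc ∑ i, g (x + s • v) i * v i - ∑ i, g (x + (0 : ℝ) • v) i * v i
        = ∑ i, (g (x + s • v) - g x) i * v i := by
          simp [← Finset.sum_sub_distrib, sub_mul]
      _ ≤ euclNorm (g (x + s • v) - g x) * euclNorm v := sum_mul_le_euclNorm_mul _ _
      _ ≤ L * (s * euclNorm v) * euclNorm v :=
          mul_le_mul_of_nonneg_right hLs (Real.sqrt_nonneg _)
      _ = L * (∑ i, v i ^ 2) * s := by rw [← euclNorm_sq]; ring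
  simpa using image_sub_le_of_deriv_sub_le ht hderiv hslope

section SearchDirection

variable {A : Matrix (Fin m) (Fin n) ℝ} {D : Fin n → ℝ → ℝ} {g : (Fin n → ℝ) → Fin n → ℝ}
  {x : Fin n → ℝ}

theorem searchDir_apply (i : Fin n) :
    searchDir A D g x i = -((D i (x i))⁻¹ * redCost A D g x i) := by
  simp [searchDir, Hinv, mulVec_diagonal]

theorem redCost_apply {i : Fin n} (hD : D i (x i) ≠ 0) :
    redCost A D g x i = -(D i (x i) * searchDir A D g x i) := by
  rw [searchDir_apply, mul_neg, neg_neg, mul_inv_cancel_left₀ hD]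

theorem xnorm2_eq_sum (z : Fin n → ℝ) : xnorm2 D x z = ∑ i, D i (x i) * z i ^ 2 := by
  simp only [xnorm2, Hmat, mulVec_diagonal, dotProduct]
  exact Finset.sum_congr rfl fun i _ => by ring

theorem mul_sum_sq_le_xnorm2 {β : ℝ} (hβ : ∀ i, β ≤ D i (x i)) (z : Fin n → ℝ) :
    β * ∑ i, z i ^ 2 ≤ xnorm2 D x z := by
  rw [xnorm2_eq_sum, Finset.mul_sum]
  exact Finset.sum_le_sum fun i _ => mul_le_mul_of_nonneg_right (hβ i) (sq_nonneg _)

theorem mulVec_searchDir (hA : A.rank = m) (hD : ∀ i, 0 < D i (x i)) :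
    A *ᵥ searchDir A D g x = 0 := by
  have hM : IsUnit (A * Hinv D x * Aᵀ).det :=
    isUnit_det_mul_diagonal_mul_transpose (hA.trans (Fintype.card_fin m).symm)
      fun i => inv_pos.2 (hD i)
  simp only [searchDir, redCost, dualY, mulVec_neg, mulVec_sub, mulVec_mulVec,
    ← Matrix.mul_assoc, mul_nonsing_inv _ hM, Matrix.one_mul, sub_self, neg_zero]

theorem sum_grad_mul_searchDir (hA : A.rank = m) (hD : ∀ i, 0 < D i (x i)) :
    ∑ i, g x i * searchDir A D g x i = -xnorm2 D x (searchDir A D g x) := by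
  have hsplit : g x = redCost A D g x + Aᵀ *ᵥ dualY A D g x := by simp [redCost]
  have horth : (Aᵀ *ᵥ dualY A D g x) ⬝ᵥ searchDir A D g x = 0 := by
    rw [mulVec_transpose, ← dotProduct_mulVec, mulVec_searchDir hA hD, dotProduct_zero]
  calc ∑ i, g x i * searchDir A D g x i
      = redCost A D g x ⬝ᵥ searchDir A D g x + (Aᵀ *ᵥ dualY A D g x) ⬝ᵥ searchDir A D g x := by
        rw [← add_dotProduct, ← hsplit]; rfl
    _ = -xnorm2 D x (searchDir A D g x) := by
        rw [horth, add_zero, xnorm2_eq_sum, dotProduct, ← Finset.sum_neg_distrib]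
        exact Finset.sum_congr rfl fun i _ => by rw [redCost_apply (hD i).ne']; ring

theorem alphaBar_candidates_finite (β Lf : ℝ) :
    (insert (2 * β / Lf)
      {a : ℝ | ∃ i, 0 < redCost A D g x i ∧ a = x i * D i (x i) / redCost A D g x i}).Finite :=
  ((Set.finite_range fun i => x i * D i (x i) / redCost A D g x i).subset
    (by rintro a ⟨i, -, rfl⟩; exact ⟨i, rfl⟩)).insert _

theorem alphaBar_le {β Lf : ℝ} {i : Fin n} (hi : 0 < redCost A D g x i) :
    alphaBar A D g β Lf x ≤ x i * D i (x i) / redCost A D g x i :=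
  csInf_le (alphaBar_candidates_finite β Lf).bddBelow (Set.mem_insert_of_mem _ ⟨i, hi, rfl⟩)

theorem alphaBar_pos {β Lf : ℝ} (hβ : 0 < β) (hL : 0 < Lf) (hx : ∀ i, 0 < x i)
    (hD : ∀ i, 0 < D i (x i)) : 0 < alphaBar A D g β Lf x := by
  rcases (Set.insert_nonempty _ _).csInf_mem (alphaBar_candidates_finite β Lf) with h | ⟨i, hi, h⟩
  · rw [alphaBar, h]; positivity
  · rw [alphaBar, h]; have := hx i; have := hD i; positivity

theorem add_smul_searchDir_mem_feas {b : Fin m → ℝ} {β Lf s : ℝ} (hA : A.rank = m)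
    (hx : x ∈ RelInt A b) (hD : ∀ i, 0 < D i (x i))
    (hs : s ∈ Set.Icc 0 (alphaBar A D g β Lf x)) : x + s • searchDir A D g x ∈ Feas A b := by
  refine ⟨by rw [mulVec_add, mulVec_smul, mulVec_searchDir hA hD, smul_zero, add_zero, hx.1],
    fun i => ?_⟩
  have hcoord : (x + s • searchDir A D g x) i
      = (x i * D i (x i) - s * redCost A D g x i) / D i (x i) := by
    simp only [Pi.add_apply, Pi.smul_apply, smul_eq_mul, searchDir_apply]
    field_simp [(hD i).ne']
    ring
  rw [hcoord]
  refine div_nonneg ?_ (hD i).le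
  by_cases hr : 0 < redCost A D g x i
  · linarith [(le_div_iff₀ hr).1 (hs.2.trans (alphaBar_le hr))]
  · nlinarith [hx.2 i, hD i, hs.1]

theorem sufficient_decrease_of_le {b : Fin m → ℝ} {f : (Fin n → ℝ) → ℝ} {β Lf μ t : ℝ}
    (hA : A.rank = m) (hx : x ∈ RelInt A b)
    (hgrad : ∀ z ∈ Feas A b, HasFDerivAt f (toDualCLM (g z)) z)
    (hLip : ∀ z ∈ Feas A b, ∀ z' ∈ Feas A b, euclNorm (g z - g z') ≤ Lf * euclNorm (z - z'))
    (hL : 0 < Lf) (hβ : 0 < β) (hDβ : ∀ i, β ≤ D i (x i))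
    (ht : 0 ≤ t) (htα : t ≤ alphaBar A D g β Lf x) (htc : t ≤ 2 * (1 - μ) * β / Lf) :
    f (x + t • searchDir A D g x) - f x ≤
      -(μ * t * xnorm2 D x (searchDir A D g x)) := by
  set v := searchDir A D g x
  have hD : ∀ i, 0 < D i (x i) := fun i => hβ.trans_le (hDβ i)
  have hdesc := descent_along_segment hgrad hLip ht fun s hs =>
    add_smul_searchDir_mem_feas hA hx hD (β := β) ⟨hs.1, hs.2.trans htα⟩
  rw [sum_grad_mul_searchDir hA hD] at hdesc
  have hnorm := mul_sum_sq_le_xnorm2 hDβ v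
  have hLt : Lf * t ≤ 2 * (1 - μ) * β := by rwa [le_div_iff₀ hL, mul_comm] at htc
  have hμ : 0 ≤ 1 - μ := by nlinarith
  have h1 : Lf * t * (t * ∑ i, v i ^ 2) ≤ 2 * (1 - μ) * β * (t * ∑ i, v i ^ 2) :=
    mul_le_mul_of_nonneg_right hLt (by positivity)
  have h2 : (1 - μ) * t * (β * ∑ i, v i ^ 2) ≤ (1 - μ) * t * xnorm2 D x v :=
    mul_le_mul_of_nonneg_left hnorm (by positivity)
  linarith

end SearchDirection

end HBA

open Matrix Filter Set in
theorem stmt6_general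
    {n m : ℕ}
    (A : Matrix (Fin m) (Fin n) ℝ) (b : Fin m → ℝ)
    (hrank : A.rank = m)
    (f : (Fin n → ℝ) → ℝ) (g : (Fin n → ℝ) → Fin n → ℝ)
    (hgrad : ∀ x ∈ HBA.Feas A b, HasFDerivAt f (HBA.toDualCLM (g x)) x)
    (Lf : ℝ) (hLf : 0 < Lf)
    (hLip : ∀ x ∈ HBA.Feas A b, ∀ x' ∈ HBA.Feas A b,
      HBA.euclNorm (g x - g x') ≤ Lf * HBA.euclNorm (x - x'))
    (D : Fin n → ℝ → ℝ)
    (β : ℝ) (hβ : 0 < β) (hDβ : ∀ i, ∀ t ∈ Set.Ioi (0:ℝ), β ≤ D i t)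
    (μ δ : ℝ) (hδ : δ ∈ Set.Ioo (0:ℝ) 1)
    (x : Fin n → ℝ) (hx : x ∈ HBA.RelInt A b) :
    min (2 * (1 - μ) * β * δ / Lf) (HBA.alphaBar A D g β Lf x) ≤
      HBA.stepSize A D g f β Lf μ δ x := by
  have hDβx : ∀ i, β ≤ D i (x i) := fun i => hDβ i (x i) (hx.2 i)
  have hα := HBA.alphaBar_pos (A := A) (g := g) hβ hLf hx.2 fun i => hβ.trans_le (hDβx i)
  rw [show 2 * (1 - μ) * β * δ / Lf = 2 * (1 - μ) * β / Lf * δ by ring]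
  refine min_mul_le_pow_sInf_mul hδ.1.le fun l hl => ?_
  have hpow : δ ^ l ≤ 1 := pow_le_one₀ hδ.1.le hδ.2.le
  exact HBA.sufficient_decrease_of_le hrank hx hgrad hLip hLf hβ hDβx
    (mul_nonneg (pow_nonneg hδ.1.le l) hα.le) (mul_le_of_le_one_left hα.le hpow) hl

open Matrix Filter Set in
theorem stmt6
    {n m : ℕ}
    (A : Matrix (Fin m) (Fin n) ℝ) (b : Fin m → ℝ)
    (hrank : A.rank = m)
    (f : (Fin n → ℝ) → ℝ) (g : (Fin n → ℝ) → Fin n → ℝ)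
    (hgrad : ∀ x ∈ HBA.Feas A b, HasFDerivAt f (HBA.toDualCLM (g x)) x)
    (Lf : ℝ) (hLf : 0 < Lf)
    (hLip : ∀ x ∈ HBA.Feas A b, ∀ x' ∈ HBA.Feas A b,
      HBA.euclNorm (g x - g x') ≤ Lf * HBA.euclNorm (x - x'))
    (x0 : Fin n → ℝ) (hx0 : x0 ∈ HBA.RelInt A b)
    (hbdd : Bornology.IsBounded {x | x ∈ HBA.Feas A b ∧ f x ≤ f x0})
    (θ θd D : Fin n → ℝ → ℝ)
    (hθ1 : ∀ i, ∀ t ∈ Set.Ioi (0:ℝ), HasDerivAt (θ i) (θd i t) t)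
    (hθ2 : ∀ i, ∀ t ∈ Set.Ioi (0:ℝ), HasDerivAt (θd i) (D i t) t)
    (hDpos : ∀ i, ∀ t ∈ Set.Ioi (0:ℝ), 0 < D i t)
    (hDlip : ∀ i, ∀ t ∈ Set.Ioi (0:ℝ), ∃ r > (0:ℝ), ∃ K : NNReal,
      LipschitzOnWith K (D i) (Set.Ioo (t - r) (t + r) ∩ Set.Ioi 0))
    (hsteep : ∀ i, Filter.Tendsto (θd i) (nhdsWithin (0:ℝ) (Set.Ioi 0)) Filter.atBot)
    (β : ℝ) (hβ : 0 < β) (hDβ : ∀ i, ∀ t ∈ Set.Ioi (0:ℝ), β ≤ D i t)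
    (ε : ℝ) (hε : 0 < ε) (hDε : ∀ i, ∀ t ∈ Set.Ioi (0:ℝ), ε ≤ t * D i t)
    (μ δ : ℝ) (hμ : μ ∈ Set.Ioo (0:ℝ) 1) (hδ : δ ∈ Set.Ioo (0:ℝ) 1)
    (x : Fin n → ℝ) (hx : x ∈ HBA.RelInt A b) (hvx : HBA.searchDir A D g x ≠ 0) :
    min (2 * (1 - μ) * β * δ / Lf) (HBA.alphaBar A D g β Lf x) ≤
      HBA.stepSize A D g f β Lf μ δ x :=
  stmt6_general A b hrank f g hgrad Lf hLf hLip D β hβ hDβ μ δ hδ x hx
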